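/- arXiv:1209.5023 — 5 statements merged into one kernel-verified Lean document; each statement's English description precedes it below -/
import Mathlib

section
/- Let q > p > 2, k ≥ 0, and M_b = ((q-p+1)/(q-p)) · ((q-p+1)/(p-1))^{-1/(q-p+1)}. Then the function V_k(x) = M_b · ((x+k)^{(q-p)/(q-p+1)} − k^{(q-p)/(q-p+1)}) satisfies (|V_k'|^{p-2} V_k')' + |V_k'|^q = 0 pointwise on (0,1), with V_k(0) = 0. -/
/-!
Writing `s = q - p + 1`, the derivative of `V_k` is the pure power `c (x + k) ^ (-1 / s)` with
`c = M_b (q - p) / s`, so the `p`-Laplacian flux `|V'| ^ (p - 2) V'` is `c ^ (p - 1) (x + k) ^ (-(p - 1) / s)`.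
Its derivative and `|V'| ^ q` are both multiples of `(x + k) ^ (-q / s)`, because `(p - 1) + s = q`,
and the two coefficients cancel exactly when `c ^ s = (p - 1) / s`, which is how `M_b` is chosen.
-/

open Set Filter Topology Real

lemma hasDerivAt_add_const_rpow {k e x : ℝ} (hx : 0 < x + k) :
    HasDerivAt (fun y => (y + k) ^ e) (e * (x + k) ^ (e - 1)) x := by
  simpa using ((hasDerivAt_id x).add_const k).rpow_const (p := e) (Or.inl hx.ne')

lemma hasDerivAt_const_mul_add_const_rpow_sub {M a k x : ℝ} (hx : 0 < x + k) :
    HasDerivAt (fun y => M * ((y + k) ^ a - k ^ a)) (M * a * (x + k) ^ (a - 1)) x := by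
  simpa [mul_assoc] using ((hasDerivAt_add_const_rpow hx).sub_const (k ^ a)).const_mul M

lemma abs_rpow_mul_self_of_pos {t : ℝ} (ht : 0 < t) (r : ℝ) : |t| ^ r * t = t ^ (r + 1) := by
  rw [abs_of_pos ht, rpow_add ht, rpow_one]

lemma rpow_neg_one_div_rpow {b s : ℝ} (hb : 0 ≤ b) (hs : s ≠ 0) : (b ^ (-(1 / s))) ^ s = b⁻¹ := by
  rw [← rpow_mul hb, show -(1 / s) * s = -1 by field_simp, rpow_neg_one]

section PowerProfile

variable {p q c e k x : ℝ} {u : ℝ → ℝ}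

lemma hasDerivAt_flux_of_eventuallyEq_rpow (hc : 0 < c) (hx : 0 < x + k)
    (hu : u =ᶠ[𝓝 x] fun y => c * (y + k) ^ e) :
    HasDerivAt (fun y => |u y| ^ (p - 2) * u y)
      (c ^ (p - 1) * (e * (p - 1) * (x + k) ^ (e * (p - 1) - 1))) x := by
  have hflux : (fun y => |u y| ^ (p - 2) * u y) =ᶠ[𝓝 x]
      fun y => c ^ (p - 1) * (y + k) ^ (e * (p - 1)) := by
    filter_upwards [hu, Ioi_mem_nhds (show -k < x by linarith)] with y hy hyk
    have hyk : 0 < y + k := by linarith [mem_Ioi.mp hyk]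
    have hpos : 0 < (y + k) ^ e := rpow_pos_of_pos hyk e
    rw [hy, abs_rpow_mul_self_of_pos (mul_pos hc hpos), show p - 2 + 1 = p - 1 by ring,
      mul_rpow hc.le hpos.le, ← rpow_mul hyk.le]
  exact ((hasDerivAt_add_const_rpow hx).const_mul _).congr_of_eventuallyEq hflux

lemma abs_rpow_of_eventuallyEq_rpow (hc : 0 < c) (hx : 0 < x + k)
    (hu : u =ᶠ[𝓝 x] fun y => c * (y + k) ^ e) :
    |u x| ^ q = c ^ q * (x + k) ^ (e * q) := by
  have hpos : 0 < (x + k) ^ e := rpow_pos_of_pos hx e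
  rw [hu.self_of_nhds, abs_of_pos (mul_pos hc hpos), mul_rpow hc.le hpos.le, ← rpow_mul hx.le]

theorem deriv_flux_add_abs_rpow_eq_zero (hs : q - p + 1 ≠ 0) (hc : 0 < c)
    (hcs : c ^ (q - p + 1) = (p - 1) / (q - p + 1)) (hx : 0 < x + k)
    (hu : u =ᶠ[𝓝 x] fun y => c * (y + k) ^ (-(1 / (q - p + 1)))) :
    deriv (fun y => |u y| ^ (p - 2) * u y) x + |u x| ^ q = 0 := by
  set s := q - p + 1 with hs_def
  have hexp : -(1 / s) * (p - 1) - 1 = -(1 / s) * q := by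
    field_simp
    ring
  have hcq : c ^ q = c ^ (p - 1) * ((p - 1) / s) := by
    rw [← hcs, ← rpow_add hc, hs_def]
    ring_nf
  rw [(hasDerivAt_flux_of_eventuallyEq_rpow hc hx hu).deriv,
    abs_rpow_of_eventuallyEq_rpow hc hx hu, hexp, hcq]
  ring

end PowerProfile

theorem stmt_1 (p q k Mb : ℝ) (hp : 2 < p) (hq : p < q) (hk : 0 ≤ k)
    (hMb : Mb = ((q - p + 1) / (q - p)) * ((q - p + 1) / (p - 1)) ^ (-(1 / (q - p + 1))))
    (V : ℝ → ℝ)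
    (hV : ∀ x, V x = Mb * ((x + k) ^ ((q - p) / (q - p + 1)) - k ^ ((q - p) / (q - p + 1)))) :
    V 0 = 0 ∧
      ∀ x ∈ Set.Ioo (0 : ℝ) 1,
        deriv (fun y => |deriv V y| ^ (p - 2) * deriv V y) x + |deriv V x| ^ q = 0 := by
  have hs : 0 < q - p + 1 := by linarith
  have hb : 0 < (q - p + 1) / (p - 1) := div_pos hs (by linarith)
  set c := ((q - p + 1) / (p - 1)) ^ (-(1 / (q - p + 1)))
  have hMbc : Mb * ((q - p) / (q - p + 1)) = c := by
    rw [hMb]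
    field_simp [show q - p ≠ 0 by linarith]
  have hV' : ∀ y, 0 < y + k → deriv V y = c * (y + k) ^ (-(1 / (q - p + 1))) := by
    intro y hy
    rw [funext hV, (hasDerivAt_const_mul_add_const_rpow_sub hy).deriv, hMbc]
    congr 2
    field_simp
    ring
  refine ⟨by simp [hV], fun x hx => deriv_flux_add_abs_rpow_eq_zero (k := k) hs.ne'
    (rpow_pos_of_pos hb _) (by rw [rpow_neg_one_div_rpow hb.le hs.ne', inv_div])
    (by linarith [hx.1]) ?_⟩
  filter_upwards [Ioi_mem_nhds (show -k < x by linarith [hx.1])] with y hy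
  exact hV' y (by linarith [mem_Ioi.mp hy])
end

section
/- Let q > p > 2 and let V ∈ C([0,1]) ∩ C^2((0,1)) be a nonnegative solution on (0,1) of (|V'|^{p-2}V')' + |V'|^q = 0 with V(0) = 0 and V(1) = M. Then M ≤ M_b, where M_b = ((q-p+1)/(q-p)) · ((q-p+1)/(p-1))^{-1/(q-p+1)}. In particular no such solution exists if M > M_b. -/
/-!
The flux `w = |V'|^(p-2) V'` is nonincreasing, since `w' = -|V'|^q ≤ 0`; so if `V'(x) > 0` then
`V' > 0` on all of `(0, x]`. There the equation reads `(V'^(-α))' = c` with `α = q - p + 1` and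
`c = α / (p - 1)`, and since `V'^(-α) > 0` this integrates to `V'(x)^(-α) ≥ c x`, that is
`V'(x) ≤ (c x)^(-1/α)`. Comparing `V` on `[0, 1]` with an antiderivative of this bound gives
`M = V 1 - V 0 ≤ ∫₀¹ (c x)^(-1/α) dx = M_b`.
-/

open Set Filter Topology

lemma hasDerivAt_abs_rpow_mul {a : ℝ} (ha : 0 < a) (t : ℝ) :
    HasDerivAt (fun s : ℝ => |s| ^ a * s) ((a + 1) * |t| ^ a) t := by
  have hpos : ∀ {t : ℝ}, 0 < t → HasDerivAt (fun s : ℝ => |s| ^ a * s) ((a + 1) * |t| ^ a) t := by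
    intro t ht
    have h : HasDerivAt (fun s : ℝ => s ^ (a + 1)) ((a + 1) * |t| ^ a) t := by
      simpa [abs_of_pos ht] using Real.hasDerivAt_rpow_const (p := a + 1) (Or.inl ht.ne')
    refine h.congr_of_eventuallyEq ?_
    filter_upwards [Ioi_mem_nhds ht] with s hs
    rw [abs_of_pos hs, Real.rpow_add_one hs.ne']
  rcases lt_trichotomy t 0 with ht | rfl | ht
  · have hodd : (fun s : ℝ => |s| ^ a * s) = fun s => -(|-s| ^ a * -s) := by
      ext s; rw [abs_neg]; ring
    have h := ((hpos (neg_pos.2 ht)).comp t (hasDerivAt_neg t)).neg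
    rw [abs_neg, mul_neg_one, neg_neg] at h
    rw [hodd]
    exact h
  · rw [hasDerivAt_iff_tendsto_slope_zero]
    have hcont : ContinuousAt (fun s : ℝ => |s| ^ a) 0 :=
      (Real.continuousAt_rpow_const _ _ (Or.inr ha.le)).comp continuous_abs.continuousAt
    have hlim := hcont.tendsto.mono_left (nhdsWithin_le_nhds (s := {0}ᶜ))
    simp only [abs_zero, Real.zero_rpow ha.ne', mul_zero] at hlim ⊢
    refine hlim.congr' ?_
    filter_upwards [self_mem_nhdsWithin] with s (hs : s ≠ 0)
    rw [zero_add, sub_zero, smul_eq_mul, mul_comm, mul_inv_cancel_right₀ hs]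
  · exact hpos ht

theorem HasDerivAt.abs_rpow_mul {u : ℝ → ℝ} {u' a s : ℝ} (hu : HasDerivAt u u' s) (ha : 0 < a) :
    HasDerivAt (fun y => |u y| ^ a * u y) ((a + 1) * |u s| ^ a * u') s :=
  (hasDerivAt_abs_rpow_mul ha (u s)).comp s hu

lemma hasDerivAt_rpow_neg_of_ode {p q u' s : ℝ} {u : ℝ → ℝ} (hp : p ≠ 1)
    (hu : HasDerivAt u u' s) (hpos : 0 < u s)
    (hode : (p - 1) * u s ^ (p - 2) * u' + u s ^ q = 0) :
    HasDerivAt (fun y => u y ^ (-(q - p + 1))) ((q - p + 1) / (p - 1)) s := by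
  convert hu.rpow_const (p := -(q - p + 1)) (Or.inl hpos.ne') using 1
  have hmerge : u s ^ (-(q - p + 1) - 1) * u s ^ q = u s ^ (p - 2) := by
    rw [← Real.rpow_add hpos]; ring_nf
  have hkey : (p - 1) * u' * u s ^ (-(q - p + 1) - 1) = -1 := by
    refine mul_right_cancel₀ (Real.rpow_pos_of_pos hpos (p - 2)).ne' ?_
    linear_combination u s ^ (-(q - p + 1) - 1) * hode - hmerge
  rw [div_eq_iff (sub_ne_zero.2 hp)]
  linear_combination (q - p + 1) * hkey

lemma mul_le_of_le_deriv_of_nonneg {f f' : ℝ → ℝ} {c x : ℝ} (hx : 0 < x)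
    (hf : ∀ s ∈ Ioc 0 x, HasDerivAt f (f' s) s) (hcf' : ∀ s ∈ Ioc 0 x, c ≤ f' s)
    (hf0 : ∀ s ∈ Ioc 0 x, 0 ≤ f s) : c * x ≤ f x := by
  have hg : ∀ s ∈ Ioc 0 x, HasDerivAt (fun s => f s - c * s) (f' s - c) s := fun s hs =>
    (hf s hs).sub (by simpa using (hasDerivAt_id s).const_mul c)
  have hmono : MonotoneOn (fun s => f s - c * s) (Ioc 0 x) := by
    refine monotoneOn_of_hasDerivWithinAt_nonneg (f' := fun s => f' s - c) (convex_Ioc 0 x)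
      (fun s hs => (hg s hs).continuousAt.continuousWithinAt) (fun s hs => ?_) (fun s hs => ?_)
    all_goals rw [interior_Ioc] at hs
    · exact (hg s (Ioo_subset_Ioc_self hs)).hasDerivWithinAt
    · exact sub_nonneg.2 (hcf' s (Ioo_subset_Ioc_self hs))
  have hlim : Tendsto (fun t => f x + c * t) (𝓝[>] 0) (𝓝 (f x)) := by
    simpa using (tendsto_const_nhds.add ((continuous_const_mul c).tendsto 0)).mono_left
      nhdsWithin_le_nhds
  refine ge_of_tendsto hlim ?_
  filter_upwards [Ioo_mem_nhdsGT hx] with t ht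
  have := hmono ⟨ht.1, ht.2.le⟩ ⟨hx, le_rfl⟩ ht.2.le
  linarith [hf0 t ⟨ht.1, ht.2.le⟩]

lemma le_rpow_of_pLaplace_ode {p q x : ℝ} {u u' : ℝ → ℝ} (hp : 2 < p) (hpq : 0 < q - p + 1)
    (hx : 0 < x) (hu : ∀ s ∈ Ioc 0 x, HasDerivAt u (u' s) s)
    (hode : ∀ s ∈ Ioc 0 x, (p - 1) * |u s| ^ (p - 2) * u' s + |u s| ^ q = 0) :
    u x ≤ ((q - p + 1) / (p - 1) * x) ^ (-(1 / (q - p + 1))) := by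
  set α := q - p + 1
  set c := α / (p - 1)
  have hc : 0 < c := div_pos hpq (by linarith)
  rcases le_or_gt (u x) 0 with hux | hux
  · exact hux.trans (by positivity)
  have hflux : ∀ s ∈ Ioc 0 x, HasDerivAt (fun y => |u y| ^ (p - 2) * u y) (-|u s| ^ q) s := by
    intro s hs
    convert (hu s hs).abs_rpow_mul (a := p - 2) (by linarith) using 1
    linarith [hode s hs]
  have hflux_anti : AntitoneOn (fun y => |u y| ^ (p - 2) * u y) (Ioc 0 x) := by
    refine antitoneOn_of_hasDerivWithinAt_nonpos (f' := fun s => -|u s| ^ q) (convex_Ioc 0 x)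
      (fun s hs => (hflux s hs).continuousAt.continuousWithinAt) (fun s hs => ?_) (fun s _ => ?_)
    · rw [interior_Ioc] at hs
      exact (hflux s (Ioo_subset_Ioc_self hs)).hasDerivWithinAt
    · exact neg_nonpos.2 (by positivity)
  have hupos : ∀ s ∈ Ioc 0 x, 0 < u s := by
    intro s hs
    by_contra! hus
    have hx_pos : 0 < |u x| ^ (p - 2) * u x := by positivity
    have hs_nonpos : |u s| ^ (p - 2) * u s ≤ 0 := mul_nonpos_of_nonneg_of_nonpos (by positivity) hus
    linarith [hflux_anti hs ⟨hx, le_rfl⟩ hs.2]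
  have hcx : c * x ≤ u x ^ (-α) := by
    refine mul_le_of_le_deriv_of_nonneg (f := fun y => u y ^ (-α)) hx (fun s hs => ?_)
      (fun _ _ => le_rfl) (fun s hs => (Real.rpow_pos_of_pos (hupos s hs) _).le)
    refine hasDerivAt_rpow_neg_of_ode (by linarith) (hu s hs) (hupos s hs) ?_
    simpa [abs_of_pos (hupos s hs)] using hode s hs
  calc u x = (u x ^ (-α)) ^ (-(1 / α)) := by
        rw [← Real.rpow_mul hux.le, neg_mul_neg, mul_one_div_cancel hpq.ne', Real.rpow_one]
    _ ≤ (c * x) ^ (-(1 / α)) :=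
        Real.rpow_le_rpow_of_nonpos (by positivity) hcx (neg_nonpos.2 (by positivity))

lemma deriv_le_rpow_of_pLaplace {p q : ℝ} {V : ℝ → ℝ} (hp : 2 < p) (hpq : 0 < q - p + 1)
    (hV : ContDiffOn ℝ 2 V (Ioo 0 1))
    (heq : ∀ x ∈ Ioo (0 : ℝ) 1,
      deriv (fun y => |deriv V y| ^ (p - 2) * deriv V y) x + |deriv V x| ^ q = 0) :
    ∀ x ∈ Ioo (0 : ℝ) 1, deriv V x ≤ ((q - p + 1) / (p - 1) * x) ^ (-(1 / (q - p + 1))) := by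
  have hV'' : ∀ x ∈ Ioo (0 : ℝ) 1, HasDerivAt (deriv V) (deriv (deriv V) x) x := fun x hx =>
    (((hV.deriv_of_isOpen isOpen_Ioo (by norm_num)).differentiableOn one_ne_zero).differentiableAt
      (isOpen_Ioo.mem_nhds hx)).hasDerivAt
  have hode : ∀ x ∈ Ioo (0 : ℝ) 1,
      (p - 1) * |deriv V x| ^ (p - 2) * deriv (deriv V) x + |deriv V x| ^ q = 0 := by
    intro x hx
    rw [← heq x hx, ((hV'' x hx).abs_rpow_mul (by linarith)).deriv]
    ring_nf
  intro x hx
  have hsub : Ioc 0 x ⊆ Ioo 0 1 := fun s hs => ⟨hs.1, hs.2.trans_lt hx.2⟩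
  exact le_rpow_of_pLaplace_ode hp hpq hx.1 (fun s hs => hV'' s (hsub hs))
    (fun s hs => hode s (hsub hs))

lemma hasDerivAt_mul_rpow_add_one_div {c r x : ℝ} (hcx : c * x ≠ 0) (hr : r + 1 ≠ 0) :
    HasDerivAt (fun y => (c * y) ^ (r + 1) / (c * (r + 1))) ((c * x) ^ r) x := by
  have hc : c ≠ 0 := left_ne_zero_of_mul hcx
  refine ((((hasDerivAt_id x).const_mul c).rpow_const (p := r + 1)
    (Or.inl hcx)).div_const (c * (r + 1))).congr_deriv ?_
  field_simp
  simp

lemma sub_le_sub_of_hasDerivAt_le {f g f' g' : ℝ → ℝ} {a b : ℝ} (hab : a ≤ b)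
    (hf : ContinuousOn f (Icc a b)) (hg : ContinuousOn g (Icc a b))
    (hf' : ∀ x ∈ Ioo a b, HasDerivAt f (f' x) x) (hg' : ∀ x ∈ Ioo a b, HasDerivAt g (g' x) x)
    (hle : ∀ x ∈ Ioo a b, f' x ≤ g' x) : f b - f a ≤ g b - g a := by
  have hanti : AntitoneOn (f - g) (Icc a b) := by
    refine antitoneOn_of_hasDerivWithinAt_nonpos (convex_Icc a b) (hf.sub hg)
      (fun x hx => ?_) (fun x hx => ?_) (f' := f' - g')
    all_goals rw [interior_Icc] at hx
    · exact ((hf' x hx).sub (hg' x hx)).hasDerivWithinAt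
    · exact sub_nonpos.2 (hle x hx)
  have := hanti (left_mem_Icc.2 hab) (right_mem_Icc.2 hab) hab
  simp only [Pi.sub_apply] at this
  linarith

lemma sub_le_rpow_div_of_deriv_le_mul_rpow {f f' : ℝ → ℝ} {c r : ℝ} (hc : 0 < c) (hr : -1 < r)
    (hf : ContinuousOn f (Icc 0 1)) (hf' : ∀ x ∈ Ioo 0 1, HasDerivAt f (f' x) x)
    (hle : ∀ x ∈ Ioo 0 1, f' x ≤ (c * x) ^ r) : f 1 - f 0 ≤ c ^ r / (r + 1) := by
  have hr1 : 0 < r + 1 := by linarith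
  have hG : ContinuousOn (fun y => (c * y) ^ (r + 1) / (c * (r + 1))) (Icc 0 1) :=
    (((Real.continuous_rpow_const hr1.le).comp (continuous_const_mul c)).div_const _).continuousOn
  convert sub_le_sub_of_hasDerivAt_le zero_le_one hf hG hf'
    (fun x hx => hasDerivAt_mul_rpow_add_one_div (mul_pos hc hx.1).ne' hr1.ne') hle using 1
  rw [mul_zero, Real.zero_rpow hr1.ne', zero_div, sub_zero, mul_one, Real.rpow_add_one hc.ne']
  field_simp

theorem stmt_3_general (p q M Mb : ℝ) (hp : 2 < p) (hq : p < q)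
    (hMb : Mb = ((q - p + 1) / (q - p)) * ((q - p + 1) / (p - 1)) ^ (-(1 / (q - p + 1))))
    (V : ℝ → ℝ)
    (hVcont : ContinuousOn V (Set.Icc 0 1))
    (hVC2 : ContDiffOn ℝ 2 V (Set.Ioo 0 1))
    (heq : ∀ x ∈ Set.Ioo (0 : ℝ) 1,
      deriv (fun y => |deriv V y| ^ (p - 2) * deriv V y) x + |deriv V x| ^ q = 0)
    (hV0 : V 0 = 0) (hV1 : V 1 = M) :
    M ≤ Mb := by
  have hα : 0 < q - p + 1 := by linarith
  have hr : -(1 / (q - p + 1)) + 1 = (q - p) / (q - p + 1) := by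
    field_simp
    ring
  have hV' : ∀ x ∈ Ioo (0 : ℝ) 1, HasDerivAt V (deriv V x) x := fun x hx =>
    ((hVC2.differentiableOn (by norm_num)).differentiableAt (isOpen_Ioo.mem_nhds hx)).hasDerivAt
  have hbound := sub_le_rpow_div_of_deriv_le_mul_rpow (div_pos hα (by linarith : 0 < p - 1))
    (neg_lt_neg ((div_lt_one hα).2 (by linarith))) hVcont hV'
    (deriv_le_rpow_of_pLaplace hp hα hVC2 heq)
  rw [hV0, hV1, sub_zero, hr] at hbound
  rw [hMb]
  convert hbound using 1
  field_simp

theorem stmt_3 (p q M Mb : ℝ) (hp : 2 < p) (hq : p < q) (hM : 0 ≤ M)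
    (hMb : Mb = ((q - p + 1) / (q - p)) * ((q - p + 1) / (p - 1)) ^ (-(1 / (q - p + 1))))
    (V : ℝ → ℝ)
    (hVcont : ContinuousOn V (Set.Icc 0 1))
    (hVC2 : ContDiffOn ℝ 2 V (Set.Ioo 0 1))
    (hVnonneg : ∀ x ∈ Set.Icc (0 : ℝ) 1, 0 ≤ V x)
    (heq : ∀ x ∈ Set.Ioo (0 : ℝ) 1,
      deriv (fun y => |deriv V y| ^ (p - 2) * deriv V y) x + |deriv V x| ^ q = 0)
    (hV0 : V 0 = 0) (hV1 : V 1 = M) :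
    M ≤ Mb :=
  stmt_3_general p q M Mb hp hq hMb V hVcont hVC2 heq hV0 hV1
end

section
/- Let q > p > 2 and let V ∈ C([0,1]) ∩ C^2((0,1)) solve (|V'|^{p-2}V')' + |V'|^q = 0 on (0,1) with V(0) = 0 and V(1) = 0. Then V ≡ 0 on [0,1]. -/
/-!
With `u = V'` and `g = |u| ^ (p - 2) * u`, the equation says `g' = -|u| ^ q`. Since
`|g| = |u| ^ (p - 1)` and `q > p - 1`, on every compact subinterval of `(0, 1)` where `u` is
bounded we get `|g'| ≤ K |g|`, so by Grönwall's inequality `g` vanishes identically as soon as it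
vanishes at one point. Rolle's theorem provides such a point, hence `V' = 0` on `(0, 1)` and `V`
is constant on `[0, 1]`.
-/

open Set Filter Topology Asymptotics

theorem hasDerivAt_abs_rpow_mul_self {r : ℝ} (hr : 0 < r) (t : ℝ) :
    HasDerivAt (fun s : ℝ => |s| ^ r * s) ((r + 1) * |t| ^ r) t := by
  rcases eq_or_ne t 0 with rfl | ht
  · have hlim : Tendsto (fun s : ℝ => |s| ^ r) (𝓝 0) (𝓝 0) := by
      simpa [Real.zero_rpow hr.ne'] using
        (continuous_abs.tendsto' (0 : ℝ) 0 abs_zero).rpow_const (Or.inr hr.le)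
    rw [hasDerivAt_iff_isLittleO]
    simpa [Real.zero_rpow hr.ne'] using
      ((isLittleO_one_iff ℝ).2 hlim).mul_isBigO (isBigO_refl (fun s : ℝ => s) (𝓝 0))
  · refine (((hasDerivAt_abs ht).rpow_const (p := r) (Or.inl (abs_ne_zero.2 ht))).mul
      (hasDerivAt_id t)).congr_deriv ?_
    rw [Real.rpow_sub_one (abs_ne_zero.2 ht), id, mul_comm _ t, ← mul_assoc, ← mul_assoc,
      self_mul_sign]
    field_simp [abs_ne_zero.2 ht]

theorem abs_abs_rpow_mul_self {r : ℝ} (hr : r + 1 ≠ 0) (s : ℝ) :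
    |(|s| ^ r * s)| = |s| ^ (r + 1) := by
  rw [abs_mul, abs_of_nonneg (by positivity), Real.rpow_add_one' (abs_nonneg s) hr]

theorem rpow_le_mul_rpow_of_le {x M r q : ℝ} (hx : 0 ≤ x) (hxM : x ≤ M) (hr : 0 < r)
    (hrq : r ≤ q) : x ^ q ≤ M ^ (q - r) * x ^ r := by
  rcases hx.eq_or_lt with rfl | hx
  · simp [Real.zero_rpow hr.ne', Real.zero_rpow (hr.trans_le hrq).ne']
  calc x ^ q = x ^ (q - r) * x ^ r := by rw [← Real.rpow_add hx, sub_add_cancel]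
    _ ≤ M ^ (q - r) * x ^ r := by gcongr

theorem eqOn_zero_of_norm_deriv_le_mul_norm {E : Type*} [NormedAddCommGroup E] [NormedSpace ℝ E]
    {f f' : ℝ → E} {K a b t₀ : ℝ} (hf : ∀ t ∈ Icc a b, HasDerivAt f (f' t) t)
    (bound : ∀ t ∈ Icc a b, ‖f' t‖ ≤ K * ‖f t‖) (ht₀ : t₀ ∈ Icc a b) (h₀ : f t₀ = 0) :
    EqOn f 0 (Icc a b) := by
  intro t ht
  rcases le_total t₀ t with h | h
  · have hsub : Icc t₀ t ⊆ Icc a b := Icc_subset_Icc ht₀.1 ht.2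
    exact eq_zero_of_abs_deriv_le_mul_abs_self_of_eq_zero_right
      (HasDerivAt.continuousOn fun s hs => hf s (hsub hs))
      (fun s hs => (hf s (hsub (Ico_subset_Icc_self hs))).hasDerivWithinAt) h₀
      (fun s hs => bound s (hsub (Ico_subset_Icc_self hs))) t ⟨h, le_rfl⟩
  · -- run Grönwall forward for the reflection `s ↦ f (-s)` on `[-t₀, -t]`
    have hsub : ∀ s ∈ Icc (-t₀) (-t), -s ∈ Icc a b := fun s hs =>
      ⟨by linarith [hs.2, ht.1], by linarith [hs.1, ht₀.2]⟩
    have hrefl : ∀ s ∈ Icc (-t₀) (-t), HasDerivAt (fun s => f (-s)) (-f' (-s)) s := fun s hs => by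
      simpa [Function.comp_def] using (hf _ (hsub s hs)).scomp s (hasDerivAt_neg s)
    have := eq_zero_of_abs_deriv_le_mul_abs_self_of_eq_zero_right (HasDerivAt.continuousOn hrefl)
      (fun s hs => (hrefl s (Ico_subset_Icc_self hs)).hasDerivWithinAt) (by simpa using h₀)
      (fun s hs => by simpa using bound _ (hsub s (Ico_subset_Icc_self hs)))
      (-t) ⟨by linarith, le_rfl⟩
    simpa using this

theorem eq_left_of_hasDerivAt_zero {f : ℝ → ℝ} {a b : ℝ} (hf : ContinuousOn f (Icc a b))
    (hf' : ∀ x ∈ Ioo a b, HasDerivAt f 0 x) : ∀ x ∈ Icc a b, f x = f a := by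
  intro x hx
  rcases hx.1.eq_or_lt with rfl | hax
  · rfl
  obtain ⟨c, -, hc⟩ := exists_hasDerivAt_eq_slope f (fun _ => 0) hax
    (hf.mono (Icc_subset_Icc_right hx.2)) fun y hy => hf' y ⟨hy.1, hy.2.trans_le hx.2⟩
  rw [eq_comm, div_eq_zero_iff, sub_eq_zero] at hc
  exact hc.resolve_right (sub_ne_zero.2 hax.ne')

theorem eqOn_zero_of_hasDerivAt_abs_rpow_mul_self {u : ℝ → ℝ} {r q a b t₀ : ℝ} (hr : 0 < r + 1)
    (hrq : r + 1 ≤ q) (hu : ContinuousOn u (Icc a b))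
    (hg : ∀ t ∈ Icc a b, HasDerivAt (fun s => |u s| ^ r * u s) (-|u t| ^ q) t)
    (ht₀ : t₀ ∈ Icc a b) (h₀ : u t₀ = 0) : EqOn u 0 (Icc a b) := by
  obtain ⟨M, hM⟩ := isCompact_Icc.exists_bound_of_continuousOn hu
  have hbound : ∀ t ∈ Icc a b,
      ‖-|u t| ^ q‖ ≤ M ^ (q - (r + 1)) * ‖|u t| ^ r * u t‖ := fun t ht => by
    rw [norm_neg, Real.norm_eq_abs, Real.norm_eq_abs, abs_abs_rpow_mul_self hr.ne',
      abs_of_nonneg (by positivity)]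
    exact rpow_le_mul_rpow_of_le (abs_nonneg _) (hM t ht) hr hrq
  have hvanish := eqOn_zero_of_norm_deriv_le_mul_norm hg hbound ht₀ (by simp [h₀])
  intro t ht
  have := congrArg abs (hvanish ht)
  rwa [Pi.zero_apply, abs_zero, abs_abs_rpow_mul_self hr.ne',
    Real.rpow_eq_zero (abs_nonneg _) hr.ne', abs_eq_zero] at this

theorem stmt_4 (p q : ℝ) (hp : 2 < p) (hq : p < q)
    (V : ℝ → ℝ)
    (hVcont : ContinuousOn V (Set.Icc 0 1))
    (hVC2 : ContDiffOn ℝ 2 V (Set.Ioo 0 1))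
    (heq : ∀ x ∈ Set.Ioo (0 : ℝ) 1,
      deriv (fun y => |deriv V y| ^ (p - 2) * deriv V y) x + |deriv V x| ^ q = 0)
    (hV0 : V 0 = 0) (hV1 : V 1 = 0) :
    ∀ x ∈ Set.Icc (0 : ℝ) 1, V x = 0 := by
  set u := deriv V
  have hV' : ∀ x ∈ Ioo 0 1, HasDerivAt V (u x) x := fun x hx =>
    ((hVC2.differentiableOn (by norm_num)).differentiableAt (isOpen_Ioo.mem_nhds hx)).hasDerivAt
  have hu : ContDiffOn ℝ 1 u (Ioo 0 1) := hVC2.deriv_of_isOpen isOpen_Ioo (by norm_num)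
  have hg : ∀ x ∈ Ioo 0 1, HasDerivAt (fun y => |u y| ^ (p - 2) * u y) (-|u x| ^ q) x := by
    intro x hx
    have hdiff : DifferentiableAt ℝ (fun y => |u y| ^ (p - 2) * u y) x :=
      ((hasDerivAt_abs_rpow_mul_self (r := p - 2) (by linarith) (u x)).comp x
        ((hu.differentiableOn one_ne_zero).differentiableAt (isOpen_Ioo.mem_nhds hx)).hasDerivAt
        ).differentiableAt
    rw [← eq_neg_of_add_eq_zero_left (heq x hx)]
    exact hdiff.hasDerivAt
  obtain ⟨x₀, hx₀, hux₀⟩ := exists_deriv_eq_zero one_pos hVcont (hV0.trans hV1.symm)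
  have hu0 : ∀ x ∈ Ioo 0 1, u x = 0 := fun x hx =>
    have hsub := ordConnected_Ioo.uIcc_subset hx₀ hx
    eqOn_zero_of_hasDerivAt_abs_rpow_mul_self (r := p - 2) (by linarith) (by linarith)
      (hu.continuousOn.mono hsub) (fun t ht => hg t (hsub ht)) left_mem_uIcc hux₀ right_mem_uIcc
  intro x hx
  rw [← hV0]
  exact eq_left_of_hasDerivAt_zero hVcont (fun y hy => hu0 y hy ▸ hV' y hy) x hx
end

section
/- Let q > p > 2, ε ∈ (0,1/2), K > 0. Define ρ_ε(u,v) = ∫₀^v ∫₀^z f_ε(u,s) ds dz with f_ε as above, H_ε(u,v) = ∂_u ρ_ε + ((v²+ε²)^{(q-p+2)/2}/(p−1)) ∂_{vv} ρ_ε − v ∂_{uv} ρ_ε, and Φ_ε(u,v) = ρ_ε(u,v) − ∫₀^u H_ε(s,0) ds + (K+1). Then Φ_ε satisfies the differential equation ∂_u Φ_ε(u,v) − v ∂_{uv} Φ_ε(u,v) + ((v²+ε²)^{(q-p+2)/2}/(p−1)) ∂_{vv} Φ_ε(u,v) = 0 on [−K,K] × ℝ. -/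
open Set intervalIntegral Function Topology

/-!
Write `A v = (v ^ 2 + ε ^ 2) ^ ((q - p + 2) / 2) / (p - 1)`. The profile `f` satisfies the
first-order identity `∂_v (A f) = v ∂_u f`. Since `∂_u ρ`, `∂_v ∂_u ρ` and `∂_vv ρ` are
`∫₀^v ∫₀^z ∂_u f`, `∫₀^v ∂_u f` and `f`, the `v`-derivative of
`H = ∫₀^v ∫₀^z ∂_u f + A f - v ∫₀^v ∂_u f` vanishes, so `H u v = H u 0`. Subtracting
`∫₀^u H(s, 0) ds` from `ρ` removes exactly `H u 0` from `∂_u ρ` and changes no `v`-derivative,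
so the operator applied to `Φ` is `H u v - H u 0 = 0`. Differentiation under the integral sign
is justified by the joint continuity of `∂_u f` on `{u < K + 1} × ℝ`, where the base of the
power defining `f` is at least `1`.
-/

section ParametricIntegral

variable {E : Type*} [NormedAddCommGroup E] [NormedSpace ℝ E]

theorem hasDerivAt_intervalIntegral_of_continuousOn_uncurry
    {F F' : ℝ → ℝ → E} {U : Set ℝ} {u₀ : ℝ} (a b : ℝ) (hU : U ∈ 𝓝 u₀)
    (hF : ∀ u ∈ U, Continuous (F u))
    (hF' : ∀ u ∈ U, ∀ s, HasDerivAt (fun u' => F u' s) (F' u s) u)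
    (hF'_cont : ContinuousOn (uncurry F') (U ×ˢ univ)) :
    HasDerivAt (fun u => ∫ s in a..b, F u s) (∫ s in a..b, F' u₀ s) u₀ := by
  obtain ⟨r, hr, hrU⟩ := Metric.nhds_basis_closedBall.mem_iff.1 hU
  obtain ⟨C, hC⟩ := ((isCompact_closedBall u₀ r).prod isCompact_uIcc).exists_bound_of_continuousOn
    (hF'_cont.mono (prod_mono hrU (subset_univ (uIcc a b))))
  have hu₀ : u₀ ∈ U := mem_of_mem_nhds hU
  have hF'_u₀ : Continuous (F' u₀) :=
    continuousOn_univ.mp (hF'_cont.uncurry_left u₀ hu₀)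
  refine (intervalIntegral.hasDerivAt_integral_of_dominated_loc_of_deriv_le
    (bound := fun _ => C) (Metric.ball_mem_nhds u₀ hr) ?_ ((hF u₀ hu₀).intervalIntegrable a b)
    hF'_u₀.aestronglyMeasurable ?_ intervalIntegrable_const ?_).2
  · filter_upwards [hU] with u hu using (hF u hu).aestronglyMeasurable
  · exact .of_forall fun s hs u hu =>
      hC (u, s) ⟨Metric.ball_subset_closedBall hu, uIoc_subset_uIcc hs⟩
  · exact .of_forall fun s _ u hu => hF' u (hrU (Metric.ball_subset_closedBall hu)) s

theorem continuousOn_uncurry_intervalIntegral {F : ℝ → ℝ → E} {U : Set ℝ} (a : ℝ)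
    (hF : ContinuousOn (uncurry F) (U ×ˢ univ)) :
    ContinuousOn (uncurry fun u z => ∫ s in a..z, F u s) (U ×ˢ univ) := by
  have h : Continuous fun x : U × ℝ => ∫ s in a..x.2, F x.1 s :=
    continuous_parametric_primitive_of_continuous (f := fun (u : U) s => F u s)
      (hF.comp_continuous (f := fun x : U × ℝ => ((x.1 : ℝ), x.2)) (by fun_prop)
        fun x => ⟨x.1.2, trivial⟩)
  rw [continuousOn_iff_continuous_domRestrict]
  exact h.comp (f := fun x : ↥(U ×ˢ univ) => ((⟨x.1.1, x.2.1⟩ : U), x.1.2)) (by fun_prop)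

theorem Continuous.continuous_primitive {g : ℝ → E} (hg : Continuous g) (a : ℝ) :
    Continuous fun b => ∫ s in a..b, g s :=
  intervalIntegral.continuous_primitive (fun _ _ => hg.intervalIntegrable _ _) a

end ParametricIntegral

section DoublePrimitive

variable {f fu : ℝ → ℝ → ℝ} {U : Set ℝ}

theorem hasDerivAt_doublePrimitive_left (hU : IsOpen U) (hf : ∀ u ∈ U, Continuous (f u))
    (hfu : ∀ u ∈ U, ∀ s, HasDerivAt (fun u' => f u' s) (fu u s) u)
    (hfu_cont : ContinuousOn (uncurry fu) (U ×ˢ univ)) {u : ℝ} (hu : u ∈ U) (v : ℝ) :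
    HasDerivAt (fun u' => ∫ z in (0 : ℝ)..v, ∫ s in (0 : ℝ)..z, f u' s)
      (∫ z in (0 : ℝ)..v, ∫ s in (0 : ℝ)..z, fu u s) u :=
  hasDerivAt_intervalIntegral_of_continuousOn_uncurry 0 v (hU.mem_nhds hu)
    (fun u' hu' => (hf u' hu').continuous_primitive 0)
    (fun _ hu' z => hasDerivAt_intervalIntegral_of_continuousOn_uncurry 0 z (hU.mem_nhds hu')
      hf hfu hfu_cont)
    (continuousOn_uncurry_intervalIntegral 0 hfu_cont)

theorem doublePrimitive_add_mul_sub_eq {A : ℝ → ℝ}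
    (hfu_cont : ContinuousOn (uncurry fu) (U ×ˢ univ))
    (hAf : ∀ u ∈ U, ∀ v, HasDerivAt (fun v' => A v' * f u v') (v * fu u v) v)
    {u : ℝ} (hu : u ∈ U) (v : ℝ) :
    (∫ z in (0 : ℝ)..v, ∫ s in (0 : ℝ)..z, fu u s) + A v * f u v
      - v * ∫ s in (0 : ℝ)..v, fu u s = A 0 * f u 0 := by
  have hfu_u := continuousOn_univ.mp (hfu_cont.uncurry_left u hu)
  have hderiv : ∀ w, HasDerivAt (fun v' => (∫ z in (0 : ℝ)..v', ∫ s in (0 : ℝ)..z, fu u s)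
      + A v' * f u v' - v' * ∫ s in (0 : ℝ)..v', fu u s) 0 w := by
    intro w
    have hG := (hfu_u.integral_hasStrictDerivAt 0 w).hasDerivAt
    refine ((((hfu_u.continuous_primitive 0).integral_hasStrictDerivAt 0 w).hasDerivAt.add
      (hAf u hu w)).sub ((hasDerivAt_id' w).mul hG)).congr_deriv ?_
    ring
  have h := is_const_of_deriv_eq_zero (fun w => (hderiv w).differentiableAt)
    (fun w => (hderiv w).deriv) v 0
  simpa using h

end DoublePrimitive

theorem transport_eq_zero_of_hasDerivAt_mul {f fu : ℝ → ℝ → ℝ} {U : Set ℝ} {A : ℝ → ℝ}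
    {ρ H Φ : ℝ → ℝ → ℝ} {c : ℝ}
    (hU : IsOpen U) (hf : ∀ u ∈ U, Continuous (f u))
    (hfu : ∀ u ∈ U, ∀ s, HasDerivAt (fun u' => f u' s) (fu u s) u)
    (hfu_cont : ContinuousOn (uncurry fu) (U ×ˢ univ))
    (hAf : ∀ u ∈ U, ∀ v, HasDerivAt (fun v' => A v' * f u v') (v * fu u v) v)
    (hρ : ∀ u v, ρ u v = ∫ z in (0 : ℝ)..v, ∫ s in (0 : ℝ)..z, f u s)
    (hH : ∀ u v, H u v = deriv (fun u' => ρ u' v) u + A v * deriv (deriv (ρ u)) v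
        - v * deriv (fun v' => deriv (fun u' => ρ u' v') u) v)
    (hΦ : ∀ u v, Φ u v = ρ u v - (∫ s in (0 : ℝ)..u, H s 0) + c)
    {u : ℝ} (hu : uIcc 0 u ⊆ U) (v : ℝ) :
    deriv (fun u' => Φ u' v) u - v * deriv (fun v' => deriv (fun u' => Φ u' v') u) v
      + A v * deriv (deriv (Φ u)) v = 0 := by
  obtain rfl : ρ = fun u v => ∫ z in (0 : ℝ)..v, ∫ s in (0 : ℝ)..z, f u s :=
    funext fun u => funext (hρ u)
  beta_reduce at hH hΦ
  have hρ_u := fun u' (hu' : u' ∈ U) => hasDerivAt_doublePrimitive_left hU hf hfu hfu_cont hu'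
  have hρ_vv : ∀ u' ∈ U, ∀ w,
      deriv (deriv fun v' => ∫ z in (0 : ℝ)..v', ∫ s in (0 : ℝ)..z, f u' s) w = f u' w := by
    intro u' hu' w
    rw [funext (((hf u' hu').continuous_primitive 0).deriv_integral _ 0)]
    exact (hf u' hu').deriv_integral _ 0 w
  have hR_v : ∀ u' ∈ U, ∀ w,
      deriv (fun v' => ∫ z in (0 : ℝ)..v', ∫ s in (0 : ℝ)..z, fu u' s) w
        = ∫ s in (0 : ℝ)..w, fu u' s := fun u' hu' =>
    ((continuousOn_univ.mp (hfu_cont.uncurry_left u' hu')).continuous_primitive 0).deriv_integral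
      _ 0
  have hH_eq : ∀ u' ∈ U, H u' 0 = A 0 * f u' 0 := by
    intro u' hu'
    rw [hH, (hρ_u u' hu' 0).deriv, hρ_vv u' hu', funext fun v' => (hρ_u u' hu' v').deriv,
      hR_v u' hu']
    exact doublePrimitive_add_mul_sub_eq hfu_cont hAf hu' 0
  have hu_mem : u ∈ U := hu right_mem_uIcc
  have hH_cont : ContinuousOn (fun s => H s 0) U := fun s hs =>
    (continuousAt_const.mul (hfu s hs 0).continuousAt).continuousWithinAt.congr hH_eq (hH_eq s hs)
  have hI : HasDerivAt (fun u' => ∫ s in (0 : ℝ)..u', H s 0) (H u 0) u :=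
    integral_hasDerivAt_right (hH_cont.mono hu).intervalIntegrable
      (hH_cont.stronglyMeasurableAtFilter hU u hu_mem) (hH_cont.continuousAt (hU.mem_nhds hu_mem))
  have hΦ_u : ∀ w, HasDerivAt (fun u' => Φ u' w)
      ((∫ z in (0 : ℝ)..w, ∫ s in (0 : ℝ)..z, fu u s) - H u 0) u := fun w => by
    simp only [hΦ]
    exact ((hρ_u u hu_mem w).sub hI).add_const c
  have hΦ_v : deriv (Φ u) = deriv fun v' => ∫ z in (0 : ℝ)..v', ∫ s in (0 : ℝ)..z, f u s := by
    funext w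
    rw [show Φ u = _ from funext (hΦ u), deriv_add_const, deriv_sub_const]
  rw [(hΦ_u v).deriv, funext fun w => (hΦ_u w).deriv, deriv_sub_const, hR_v u hu_mem,
    hΦ_v, hρ_vv u hu_mem, hH_eq u hu_mem]
  linear_combination doublePrimitive_add_mul_sub_eq hfu_cont hAf hu_mem v

section Profile

variable {k m ε L u : ℝ}

noncomputable def profileBase (k m ε L u v : ℝ) : ℝ := 1 + k / m * (v ^ 2 + ε ^ 2) ^ (k / 2) * (L - u)

/-- The paper's `f_ε` is `profile (q - p) (p - 1) ε (K + 1)`. -/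
noncomputable def profile (k m ε L u v : ℝ) : ℝ := profileBase k m ε L u v ^ (-((k + 2) / k))

noncomputable def profilePartialU (k m ε L u v : ℝ) : ℝ :=
  (k + 2) / m * (v ^ 2 + ε ^ 2) ^ (k / 2) * profileBase k m ε L u v ^ (-((k + 2) / k) - 1)

theorem one_le_profileBase (hk : 0 ≤ k) (hm : 0 ≤ m) (hu : u ≤ L) (v : ℝ) :
    1 ≤ profileBase k m ε L u v := by
  unfold profileBase
  exact le_add_of_nonneg_right (mul_nonneg (by positivity) (sub_nonneg.2 hu))

theorem profileBase_pos (hk : 0 ≤ k) (hm : 0 ≤ m) (hu : u ≤ L) (v : ℝ) :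
    0 < profileBase k m ε L u v :=
  one_pos.trans_le (one_le_profileBase hk hm hu v)

theorem continuous_rpow_sq_add_sq (hε : ε ≠ 0) (r : ℝ) :
    Continuous fun v : ℝ => (v ^ 2 + ε ^ 2) ^ r :=
  (by fun_prop : Continuous fun v : ℝ => v ^ 2 + ε ^ 2).rpow_const fun v => Or.inl (by positivity)

theorem continuous_uncurry_profileBase (hε : ε ≠ 0) :
    Continuous (uncurry (profileBase k m ε L)) := by
  have := (continuous_rpow_sq_add_sq hε (k / 2)).comp (continuous_snd (X := ℝ))
  exact continuous_const.add ((continuous_const.mul this).mul (continuous_const.sub continuous_fst))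

theorem continuous_profile (hk : 0 ≤ k) (hm : 0 ≤ m) (hε : ε ≠ 0) (hu : u ≤ L) :
    Continuous (profile k m ε L u) :=
  ((continuous_uncurry_profileBase hε).uncurry_left u).rpow_const
    fun v => Or.inl (profileBase_pos hk hm hu v).ne'

theorem continuousOn_uncurry_profilePartialU (hk : 0 ≤ k) (hm : 0 ≤ m) (hε : ε ≠ 0) :
    ContinuousOn (uncurry (profilePartialU k m ε L)) (Iio L ×ˢ univ) := by
  have hB := ((continuous_uncurry_profileBase (k := k) (m := m) (L := L) hε).continuousOn
    (s := Iio L ×ˢ univ)).rpow_const (p := -((k + 2) / k) - 1)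
    fun x hx => Or.inl (profileBase_pos hk hm hx.1.le x.2).ne'
  have hW := ((continuous_rpow_sq_add_sq hε (k / 2)).comp continuous_snd).continuousOn
    (s := Iio L ×ˢ univ)
  exact (continuousOn_const.mul hW).mul hB

theorem hasDerivAt_profile_left (hk : 0 < k) (hm : 0 ≤ m) (hu : u ≤ L) (v : ℝ) :
    HasDerivAt (fun u' => profile k m ε L u' v) (profilePartialU k m ε L u v) u := by
  have hB : HasDerivAt (fun u' => profileBase k m ε L u' v)
      (-(k / m * (v ^ 2 + ε ^ 2) ^ (k / 2))) u := by
    unfold profileBase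
    exact ((((hasDerivAt_id u).const_sub L).const_mul
      (k / m * (v ^ 2 + ε ^ 2) ^ (k / 2))).const_add 1).congr_deriv (by ring)
  refine (hB.rpow_const (Or.inl (profileBase_pos hk.le hm hu v).ne')).congr_deriv ?_
  unfold profilePartialU
  field_simp

theorem hasDerivAt_coeff_mul_profile (hk : 0 < k) (hm : 0 < m) (hε : ε ≠ 0) (hu : u ≤ L)
    (v : ℝ) :
    HasDerivAt (fun v' => (v' ^ 2 + ε ^ 2) ^ ((k + 2) / 2) / m * profile k m ε L u v')
      (v * profilePartialU k m ε L u v) v := by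
  have hX : 0 < v ^ 2 + ε ^ 2 := by positivity
  have hX' : HasDerivAt (fun v' : ℝ => v' ^ 2 + ε ^ 2) (2 * v) v := by
    simpa using (hasDerivAt_pow 2 v).add_const (ε ^ 2)
  have hA := (hX'.rpow_const (p := (k + 2) / 2) (Or.inl hX.ne')).div_const m
  have hB : HasDerivAt (fun v' => profileBase k m ε L u v')
      (k / m * (2 * v * (k / 2) * (v ^ 2 + ε ^ 2) ^ (k / 2 - 1)) * (L - u)) v :=
    (((hX'.rpow_const (Or.inl hX.ne')).const_mul (k / m)).mul_const (L - u)).const_add 1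
  have hBpos := profileBase_pos (ε := ε) hk.le hm.le hu v
  refine (hA.mul (hB.rpow_const (p := -((k + 2) / k)) (Or.inl hBpos.ne'))).congr_deriv ?_
  unfold profilePartialU
  rw [show (k + 2) / 2 - 1 = k / 2 by ring, show k / 2 - 1 = k / 2 + -1 by ring,
    Real.rpow_add hX, Real.rpow_neg_one, show (k + 2) / 2 = k / 2 + 1 by ring,
    Real.rpow_add_one hX.ne', Real.rpow_sub_one hBpos.ne']
  generalize profileBase k m ε L u v ^ (-((k + 2) / k)) = P
  field_simp
  unfold profileBase
  field_simp
  ring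

end Profile

theorem stmt_10_general (p q ε K : ℝ) (hp : 2 < p) (hq : p < q)
    (hε : ε ∈ Set.Ioo (0 : ℝ) (1 / 2))
    (f ρ H Φ : ℝ → ℝ → ℝ)
    (hf : ∀ u v, f u v =
      (1 + ((q - p) / (p - 1)) * (v ^ 2 + ε ^ 2) ^ ((q - p) / 2) * (K + 1 - u))
        ^ (-((q - p + 2) / (q - p))))
    (hρ : ∀ u v, ρ u v = ∫ z in (0 : ℝ)..v, ∫ s in (0 : ℝ)..z, f u s)
    (hH : ∀ u v, H u v =
      deriv (fun u' => ρ u' v) u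
        + ((v ^ 2 + ε ^ 2) ^ ((q - p + 2) / 2) / (p - 1)) * deriv (deriv (ρ u)) v
        - v * deriv (fun v' => deriv (fun u' => ρ u' v') u) v)
    (hΦ : ∀ u v, Φ u v = ρ u v - (∫ s in (0 : ℝ)..u, H s 0) + (K + 1)) :
    ∀ u ∈ Set.Icc (-K) K, ∀ v : ℝ,
      deriv (fun u' => Φ u' v) u
        - v * deriv (fun v' => deriv (fun u' => Φ u' v') u) v
        + ((v ^ 2 + ε ^ 2) ^ ((q - p + 2) / 2) / (p - 1)) * deriv (deriv (Φ u)) v = 0 := by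
  obtain rfl : f = profile (q - p) (p - 1) ε (K + 1) := funext fun u => funext (hf u)
  have hk : 0 < q - p := by linarith
  have hm : 0 < p - 1 := by linarith
  have hε₀ : ε ≠ 0 := hε.1.ne'
  intro u hu v
  refine transport_eq_zero_of_hasDerivAt_mul isOpen_Iio
    (fun u hu => continuous_profile hk.le hm.le hε₀ hu.le)
    (fun u hu => hasDerivAt_profile_left hk hm.le hu.le)
    (continuousOn_uncurry_profilePartialU hk.le hm.le hε₀)
    (fun u hu => hasDerivAt_coeff_mul_profile hk hm hε₀ hu.le) hρ hH hΦ ?_ v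
  exact fun x hx => hx.2.trans_lt (max_lt (by linarith [hu.1.trans hu.2]) (by linarith [hu.2]))

theorem stmt_10 (p q ε K : ℝ) (hp : 2 < p) (hq : p < q)
    (hε : ε ∈ Set.Ioo (0 : ℝ) (1 / 2)) (hK : 0 < K)
    (f ρ H Φ : ℝ → ℝ → ℝ)
    (hf : ∀ u v, f u v =
      (1 + ((q - p) / (p - 1)) * (v ^ 2 + ε ^ 2) ^ ((q - p) / 2) * (K + 1 - u))
        ^ (-((q - p + 2) / (q - p))))
    (hρ : ∀ u v, ρ u v = ∫ z in (0 : ℝ)..v, ∫ s in (0 : ℝ)..z, f u s)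
    (hH : ∀ u v, H u v =
      deriv (fun u' => ρ u' v) u
        + ((v ^ 2 + ε ^ 2) ^ ((q - p + 2) / 2) / (p - 1)) * deriv (deriv (ρ u)) v
        - v * deriv (fun v' => deriv (fun u' => ρ u' v') u) v)
    (hΦ : ∀ u v, Φ u v = ρ u v - (∫ s in (0 : ℝ)..u, H s 0) + (K + 1)) :
    ∀ u ∈ Set.Icc (-K) K, ∀ v : ℝ,
      deriv (fun u' => Φ u' v) u
        - v * deriv (fun v' => deriv (fun u' => Φ u' v') u) v
        + ((v ^ 2 + ε ^ 2) ^ ((q - p + 2) / 2) / (p - 1)) * deriv (deriv (Φ u)) v = 0 :=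
  stmt_10_general p q ε K hp hq hε f ρ H Φ hf hρ hH hΦ
end

section
/- Let q > p > 2 and ε ∈ (0,1/2). If w(t,x) = A + 2 − cosh(εx) for a constant A ≥ 0 and ε < cosh(1)^{(p−1−q)/(q−p)}, then w is a supersolution of the regularized equation: w_t − (p−1)(w_x² + ε²)^{(p−2)/2} w_{xx} − (w_x² + ε²)^{q/2} ≥ 0 for all t > 0 and x ∈ [0,1]. -/
open Set

theorem stmt_19 (p q ε A : ℝ) (hp : 2 < p) (hq : p < q)
    (hε : ε ∈ Set.Ioo (0 : ℝ) (1 / 2)) (hA : 0 ≤ A)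
    (hε' : ε < Real.cosh 1 ^ ((p - 1 - q) / (q - p))) :
    ∀ x ∈ Set.Icc (0 : ℝ) 1,
      0 ≤ (0 : ℝ)
        - (p - 1) * ((-(ε * Real.sinh (ε * x))) ^ 2 + ε ^ 2) ^ ((p - 2) / 2)
            * (-(ε ^ 2 * Real.cosh (ε * x)))
        - ((-(ε * Real.sinh (ε * x))) ^ 2 + ε ^ 2) ^ (q / 2) := by
  obtain ⟨hε0, hε2⟩ := hε
  intro x hx
  obtain ⟨hx0, hx1⟩ := hx
  set c := Real.cosh (ε * x) with hcdef
  have hc1 : 1 ≤ c := Real.one_le_cosh _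
  have hc0 : 0 < c := lt_of_lt_of_le zero_lt_one hc1
  have hch1 : c ≤ Real.cosh 1 := by
    rw [hcdef]
    have habs : |ε * x| ≤ |1| := by
      rw [abs_one, abs_mul, abs_of_nonneg hε0.le, abs_of_nonneg hx0]
      nlinarith
    exact Real.cosh_le_cosh.mpr habs
  have hcosh1 : (0:ℝ) < Real.cosh 1 := lt_of_lt_of_le hc0 hch1
  have hεc : 0 < ε * c := mul_pos hε0 hc0
  have hS : (-(ε * Real.sinh (ε * x))) ^ 2 + ε ^ 2 = (ε * c) ^ 2 := by
    have h := Real.cosh_sq (ε * x)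
    rw [hcdef]; nlinarith [h]
  rw [hS]
  have h1 : ((ε * c) ^ 2 : ℝ) ^ ((p - 2) / 2) = (ε * c) ^ (p - 2) := by
    rw [← Real.rpow_natCast (ε * c) 2, ← Real.rpow_mul hεc.le]
    congr 1; push_cast; ring
  have h2 : ((ε * c) ^ 2 : ℝ) ^ (q / 2) = (ε * c) ^ q := by
    rw [← Real.rpow_natCast (ε * c) 2, ← Real.rpow_mul hεc.le]
    congr 1; push_cast; ring
  rw [h1, h2]
  -- key: ε^(q-p) * c^(q-p+1) ≤ 1 ≤ p - 1
  have key1 : ε ^ (q - p) ≤ Real.cosh 1 ^ (p - 1 - q) := by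
    have := Real.rpow_le_rpow hε0.le hε'.le (by linarith : (0:ℝ) ≤ q - p)
    rwa [← Real.rpow_mul hcosh1.le, div_mul_cancel₀ _ (by linarith : q - p ≠ 0)] at this
  have key2 : c ^ (q - p + 1) ≤ Real.cosh 1 ^ (q - p + 1) :=
    Real.rpow_le_rpow hc0.le hch1 (by linarith)
  have key : ε ^ (q - p) * c ^ (q - p + 1) ≤ 1 := by
    calc ε ^ (q - p) * c ^ (q - p + 1)
        ≤ Real.cosh 1 ^ (p - 1 - q) * Real.cosh 1 ^ (q - p + 1) :=
          mul_le_mul key1 key2 (Real.rpow_nonneg hc0.le _) (Real.rpow_nonneg hcosh1.le _)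
      _ = 1 := by
          rw [← Real.rpow_add hcosh1, show p - 1 - q + (q - p + 1) = 0 by ring,
            Real.rpow_zero]
  -- main inequality: (εc)^q ≤ (p-1) (εc)^(p-2) ε² c
  have hmain : (ε * c) ^ q ≤ (p - 1) * (ε * c) ^ (p - 2) * (ε ^ 2 * c) := by
    have hsplit : (ε * c) ^ q = (ε * c) ^ (p - 2) * (ε ^ 2 * c) * (ε ^ (q - p) * c ^ (q - p + 1)) := by
      have e1 : ε ^ (p - 2) * ε ^ (2:ℝ) * ε ^ (q - p) = ε ^ q := by
        rw [← Real.rpow_add hε0, ← Real.rpow_add hε0]; congr 1; ring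
      have e2 : c ^ (p - 2) * c ^ (1:ℝ) * c ^ (q - p + 1) = c ^ q := by
        rw [← Real.rpow_add hc0, ← Real.rpow_add hc0]; congr 1; ring
      have eε2 : (ε:ℝ) ^ (2:ℕ) = ε ^ (2:ℝ) := by
        rw [← Real.rpow_natCast ε 2]; norm_num
      rw [Real.mul_rpow hε0.le hc0.le, Real.mul_rpow hε0.le hc0.le, eε2, ← e1, ← e2,
        Real.rpow_one]
      ring
    rw [hsplit]
    have hpos : 0 ≤ (ε * c) ^ (p - 2) * (ε ^ 2 * c) := by positivity
    nlinarith [mul_le_mul_of_nonneg_left key hpos]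
  nlinarith [hmain]
end
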